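/- Let a,b,c,d be real numbers with c ≠ 0, ad − bc ≠ 0, and Δ = (d−a)² + 4bc > 0, and let M be the Möbius transformation of ℝ ∪ {∞} extending t ↦ (at+b)/(ct+d). (i) If a + d ≠ 0, then M has exactly two fixed points t₀ ≠ t₁ in ℝ ∪ {∞}, and one of them (say t_j) attracts every orbit starting in (ℝ ∪ {∞}) \ {t_{1−j}}: for every t ≠ t_{1−j}, Mⁿ(t) → t_j, while the other fixed point t_{1−j} is repelling. (ii) If a + d = 0, then M is an involution: M(M(t)) = t for all t ∈ ℝ ∪ {∞}. -/

import Mathlib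

/-!
`mobius a b c d` is the action of `g = !![a, b; c, d] ∈ GL₂(ℝ)` on `ℝ ∪ {∞} = ℙ¹(ℝ)`, so its
iterates are the powers of `g`. As `c ≠ 0`, `∞` is not fixed, and the fixed points are the two
roots `r₀ ≠ r₁` of `c t² + (d - a) t - b`. Conjugating by `t ↦ (t - r₀) / (t - r₁)` turns `g` into
`t ↦ μ t` with `μ = (c r₁ + d) / (c r₀ + d)`; the multipliers `c rᵢ + d` are `(a + d ± √Δ) / 2`,
so for `a + d ≠ 0` the roots can be labelled with `|μ| < 1`, and every conjugated orbit `μⁿ s`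
tends to `0`. The inverse map has the same fixed points with the opposite labelling.
If `a + d = 0`, Cayley–Hamilton gives `g² = -(det g) • 1`, a scalar, which acts trivially.
-/

open OnePoint Filter Topology

/-- The Möbius transformation `t ↦ (a t + b)/(c t + d)` extended to the one-point
compactification `ℝ ∪ {∞}`, with `M(-d/c) = ∞` and `M(∞) = a/c`. -/
noncomputable def mobius (a b c d : ℝ) (p : OnePoint ℝ) : OnePoint ℝ :=
  match p with
  | Option.none => ((a / c : ℝ) : OnePoint ℝ)
  | Option.some t =>
      if c * t + d = 0 then (∞ : OnePoint ℝ)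
      else (((a * t + b) / (c * t + d) : ℝ) : OnePoint ℝ)

open Matrix

namespace OnePoint

variable {K : Type*} [Field K] [DecidableEq K]

theorem smul_eq_self_of_val_eq_scalar {g : GL (Fin 2) K} {k : K}
    (hg : (g : Matrix (Fin 2) (Fin 2) K) = scalar (Fin 2) k) (p : OnePoint K) : g • p = p := by
  have entry : ∀ i j, g i j = if i = j then k else 0 := fun i j => by
    rw [hg]; simp [Matrix.scalar_apply, Matrix.diagonal_apply]
  have hk : k ≠ 0 := by
    rintro rfl; exact g.det_ne_zero (by simp [hg])
  cases p with
  | infty => simp [smul_infty_eq_ite, entry]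
  | coe t => simp [smul_some_eq_ite, entry, hk]

theorem continuousAt_smul_coe [TopologicalSpace K] [IsTopologicalDivisionRing K] [T1Space K]
    (g : GL (Fin 2) K) {x : K} (hx : g • (x : OnePoint K) ≠ ∞) :
    ContinuousAt (g • · : OnePoint K → OnePoint K) x := by
  have hden : g 1 0 * x + g 1 1 ≠ 0 := fun h => hx (by simp [smul_some_eq_ite, h])
  have hden_cont : Continuous fun y : K => g 1 0 * y + g 1 1 := by fun_prop
  rw [continuousAt_coe]
  refine ContinuousAt.congr
    (f := fun y : K => (((g 0 0 * y + g 0 1) / (g 1 0 * y + g 1 1) : K) : OnePoint K)) ?_ ?_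
  · exact continuous_coe.continuousAt.comp (by fun_prop (disch := exact hden))
  · filter_upwards [hden_cont.continuousAt.eventually_ne hden] with y hy
    simp [smul_some_eq_ite, hy]

end OnePoint

namespace Matrix.GeneralLinearGroup

section Field

variable {K : Type*} [Field K] [DecidableEq K]

theorem denom_ne_zero_of_smul_coe_eq_self {g : GL (Fin 2) K} {r : K}
    (h : g • (r : OnePoint K) = r) : g 1 0 * r + g 1 1 ≠ 0 := fun h0 => by
  simp [smul_some_eq_ite, h0] at h

theorem exists_semiconjBy_of_smul_coe_eq_self {g : GL (Fin 2) K} {r₀ r₁ : K}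
    (h₀ : g • (r₀ : OnePoint K) = r₀) (h₁ : g • (r₁ : OnePoint K) = r₁) (hne : r₀ ≠ r₁) :
    ∃ P D : GL (Fin 2) K, P • (r₀ : OnePoint K) = (0 : K) ∧ P • (r₁ : OnePoint K) = ∞ ∧
      SemiconjBy P g D ∧ ∀ x : K, D • (x : OnePoint K) =
        ((g 1 0 * r₁ + g 1 1) / (g 1 0 * r₀ + g 1 1) * x : K) := by
  have hv := denom_ne_zero_of_smul_coe_eq_self h₀
  have hu := denom_ne_zero_of_smul_coe_eq_self h₁
  have q₀ := fixpointPolynomial_aeval_eq_zero_iff.mpr h₀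
  have q₁ := fixpointPolynomial_aeval_eq_zero_iff.mpr h₁
  simp only [fixpointPolynomial, map_sub, map_add, map_mul, Polynomial.aeval_C,
    Polynomial.aeval_X, Polynomial.aeval_X_pow, Algebra.algebraMap_self_apply] at q₀ q₁
  have vieta_sum : g 1 0 * (r₀ + r₁) = g 0 0 - g 1 1 :=
    mul_left_cancel₀ (sub_ne_zero.mpr hne) (by linear_combination q₀ - q₁)
  have vieta_prod : g 1 0 * (r₀ * r₁) = -g 0 1 := by linear_combination r₀ * vieta_sum - q₀
  refine ⟨mkOfDetNeZero !![1, -r₀; 1, -r₁]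
      (by rw [det_fin_two_of]; intro h; exact hne (by linear_combination h)),
    mkOfDetNeZero !![g 1 0 * r₁ + g 1 1, 0; 0, g 1 0 * r₀ + g 1 1]
      (by simp [det_fin_two_of, hu, hv]),
    by simp [smul_some_eq_ite, ← sub_eq_add_neg, sub_eq_zero, hne],
    by simp [smul_some_eq_ite], ?_, fun x => by simp [smul_some_eq_ite, hv, div_mul_eq_mul_div]⟩
  ext i j
  fin_cases i <;> fin_cases j <;>
    simp only [Fin.zero_eta, Fin.mk_one, Fin.isValue, Units.val_mul, val_mkOfDetNeZero, mul_apply,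
    Fin.sum_univ_two, of_apply, cons_val', cons_val_zero, cons_val_one, cons_val_fin_one]
  · linear_combination -vieta_sum
  · linear_combination vieta_prod
  · linear_combination -vieta_sum
  · linear_combination vieta_prod

end Field

section NormedField

variable {K : Type*} [NormedField K] [DecidableEq K]

theorem tendsto_pow_smul_of_semiconjBy {g P D : GL (Fin 2) K} {μ r₀ r₁ : K}
    (hPD : SemiconjBy P g D) (hD : ∀ x : K, D • (x : OnePoint K) = (μ * x : K)) (hμ : ‖μ‖ < 1)
    (h₀ : P • (r₀ : OnePoint K) = (0 : K)) (h₁ : P • (r₁ : OnePoint K) = ∞)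
    {q : OnePoint K} (hq : q ≠ r₁) :
    Tendsto (fun n : ℕ => g ^ n • q) atTop (𝓝 (r₀ : OnePoint K)) := by
  obtain ⟨s, hs⟩ : ∃ s : K, (s : OnePoint K) = P • q :=
    ne_infty_iff_exists.mp (h₁ ▸ (MulAction.injective P).ne hq)
  have hD_pow : ∀ (n : ℕ) (x : K), D ^ n • (x : OnePoint K) = (μ ^ n * x : K) := by
    intro n
    induction n with
    | zero => simp
    | succ n ih => intro x; rw [pow_succ', mul_smul, ih, hD, pow_succ', mul_assoc]
  have h_iter : ∀ n : ℕ, g ^ n • q = P⁻¹ • ((μ ^ n * s : K) : OnePoint K) := fun n => by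
    rw [eq_inv_smul_iff, ← mul_smul, (hPD.pow_right n).eq, mul_smul, ← hs, hD_pow]
  have h_lim : Tendsto (fun n : ℕ => ((μ ^ n * s : K) : OnePoint K)) atTop
      (𝓝 ((0 : K) : OnePoint K)) :=
    (continuous_coe.tendsto 0).comp
      (by simpa using (tendsto_pow_atTop_nhds_zero_of_norm_lt_one hμ).mul_const s)
  have h_inv : P⁻¹ • ((0 : K) : OnePoint K) = r₀ := by rw [inv_smul_eq_iff, h₀]
  have h_cont := continuousAt_smul_coe P⁻¹ (x := 0) (by rw [h_inv]; exact coe_ne_infty r₀)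
  simpa only [h_iter, h_inv, Function.comp_def] using h_cont.tendsto.comp h_lim

theorem tendsto_pow_smul_of_smul_coe_eq_self {g : GL (Fin 2) K} {r₀ r₁ : K}
    (h₀ : g • (r₀ : OnePoint K) = r₀) (h₁ : g • (r₁ : OnePoint K) = r₁) (hne : r₀ ≠ r₁)
    (hlt : ‖g 1 0 * r₁ + g 1 1‖ < ‖g 1 0 * r₀ + g 1 1‖) {q : OnePoint K} (hq : q ≠ r₁) :
    Tendsto (fun n : ℕ => g ^ n • q) atTop (𝓝 (r₀ : OnePoint K)) := by
  obtain ⟨P, D, hP₀, hP₁, hPD, hD⟩ := exists_semiconjBy_of_smul_coe_eq_self h₀ h₁ hne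
  refine tendsto_pow_smul_of_semiconjBy hPD hD ?_ hP₀ hP₁ hq
  rwa [norm_div, div_lt_one ((norm_nonneg _).trans_lt hlt)]

end NormedField

end Matrix.GeneralLinearGroup

noncomputable def mobiusGL (a b c d : ℝ) (hdet : a * d - b * c ≠ 0) : GL (Fin 2) ℝ :=
  GeneralLinearGroup.mkOfDetNeZero !![a, b; c, d] (by rwa [det_fin_two_of])

section
variable {a b c d : ℝ}

theorem mobius_eq_smul (hc : c ≠ 0) (hdet : a * d - b * c ≠ 0) :
    mobius a b c d = (mobiusGL a b c d hdet • ·) := by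
  funext p
  cases p with
  | infty => simp [mobius, mobiusGL, smul_infty_eq_ite, hc]
  | coe t => simp [mobius, mobiusGL, smul_some_eq_ite]

theorem mobius_eq_self_iff_of_roots (hc : c ≠ 0) (hdet : a * d - b * c ≠ 0) {r₀ r₁ : ℝ}
    (hroots : ∀ t, c * t ^ 2 + (d - a) * t - b = 0 ↔ t = r₀ ∨ t = r₁) (q : OnePoint ℝ) :
    mobius a b c d q = q ↔ q = r₀ ∨ q = r₁ := by
  rw [mobius_eq_smul hc hdet]
  cases q with
  | infty => simp [smul_infty_eq_self_iff, mobiusGL, hc]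
  | coe t =>
    simpa [← GeneralLinearGroup.fixpointPolynomial_aeval_eq_zero_iff,
      GeneralLinearGroup.fixpointPolynomial, mobiusGL] using hroots t

theorem tendsto_mobius_iterate (hc : c ≠ 0) (hdet : a * d - b * c ≠ 0) {r₀ r₁ : ℝ}
    (hroots : ∀ t, c * t ^ 2 + (d - a) * t - b = 0 ↔ t = r₀ ∨ t = r₁) (hne : r₀ ≠ r₁)
    (hlt : |c * r₁ + d| < |c * r₀ + d|) {q : OnePoint ℝ} (hq : q ≠ r₁) :
    Tendsto (fun n : ℕ => (mobius a b c d)^[n] q) atTop (𝓝 (r₀ : OnePoint ℝ)) := by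
  have hfix := mobius_eq_self_iff_of_roots hc hdet hroots
  rw [mobius_eq_smul hc hdet] at hfix ⊢
  simp_rw [smul_iterate_apply]
  exact GeneralLinearGroup.tendsto_pow_smul_of_smul_coe_eq_self ((hfix _).2 (.inl rfl))
    ((hfix _).2 (.inr rfl)) hne (by simpa [mobiusGL] using hlt) hq

theorem mobius_mobius_of_add_eq_zero (hc : c ≠ 0) (hdet : a * d - b * c ≠ 0) (htr : a + d = 0)
    (q : OnePoint ℝ) : mobius a b c d (mobius a b c d q) = q := by
  simp only [mobius_eq_smul hc hdet, ← mul_smul]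
  refine smul_eq_self_of_val_eq_scalar (k := -(a * d - b * c)) ?_ q
  obtain rfl : d = -a := by linarith
  ext i j
  fin_cases i <;> fin_cases j <;>
    simp only [mobiusGL, Fin.zero_eta, Fin.mk_one, Fin.isValue, Units.val_mul,
      GeneralLinearGroup.val_mkOfDetNeZero, mul_apply, Fin.sum_univ_two, of_apply, cons_val',
      cons_val_zero, cons_val_one, cons_val_fin_one, scalar_apply, diagonal_apply_eq,
      diagonal_apply_ne _ zero_ne_one, diagonal_apply_ne _ one_ne_zero] <;> ring

theorem exists_quadratic_roots_of_discrim_pos (hc : c ≠ 0) (hΔ : (d - a) ^ 2 + 4 * b * c > 0)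
    (htr : a + d ≠ 0) :
    ∃ r₀ r₁ : ℝ, r₀ ≠ r₁ ∧ (∀ t, c * t ^ 2 + (d - a) * t - b = 0 ↔ t = r₀ ∨ t = r₁) ∧
      c * (r₀ + r₁) = a - d ∧ |c * r₁ + d| < |c * r₀ + d| := by
  have hdisc : 0 < discrim c (d - a) (-b) := by rw [discrim]; linarith
  have hsqrt := Real.sqrt_pos.mpr hdisc
  obtain ⟨s, hs, hpos⟩ : ∃ s : ℝ, discrim c (d - a) (-b) = s * s ∧ 0 < (a + d) * s := by
    rcases htr.lt_or_gt with h | h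
    · exact ⟨-√(discrim c (d - a) (-b)), by rw [neg_mul_neg, Real.mul_self_sqrt hdisc.le],
        by nlinarith⟩
    · exact ⟨√(discrim c (d - a) (-b)), (Real.mul_self_sqrt hdisc.le).symm, mul_pos h hsqrt⟩
  have hs0 : s ≠ 0 := by rintro rfl; simp at hpos
  refine ⟨(a - d + s) / (2 * c), (a - d - s) / (2 * c), ?_, fun t => ?_, ?_, ?_⟩
  · intro h; field_simp at h; apply hs0; linarith
  · rw [show c * t ^ 2 + (d - a) * t - b = c * (t * t) + (d - a) * t + -b by ring,
      quadratic_eq_zero_iff hc hs t, neg_sub]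
  · field_simp; ring
  · rw [← sq_lt_sq]; field_simp; nlinarith

end

theorem stmt_2 (a b c d : ℝ) (hc : c ≠ 0) (hdet : a * d - b * c ≠ 0)
    (hΔ : (d - a) ^ 2 + 4 * b * c > 0) :
    ((a + d ≠ 0) →
      ∃ t₀ t₁ : OnePoint ℝ, t₀ ≠ t₁ ∧
        (∀ q : OnePoint ℝ, mobius a b c d q = q ↔ (q = t₀ ∨ q = t₁)) ∧
        (∀ q : OnePoint ℝ, q ≠ t₁ →
          Tendsto (fun n : ℕ => (mobius a b c d)^[n] q) atTop (nhds t₀)) ∧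
        (∀ q : OnePoint ℝ, q ≠ t₀ →
          Tendsto (fun n : ℕ => (mobius d (-b) (-c) a)^[n] q) atTop (nhds t₁))) ∧
    ((a + d = 0) → ∀ q : OnePoint ℝ, mobius a b c d (mobius a b c d q) = q) := by
  refine ⟨fun htr => ?_, mobius_mobius_of_add_eq_zero hc hdet⟩
  obtain ⟨r₀, r₁, hne, hroots, hsum, hlt⟩ := exists_quadratic_roots_of_discrim_pos hc hΔ htr
  have hroots' : ∀ t, -c * t ^ 2 + (a - d) * t - -b = 0 ↔ t = r₁ ∨ t = r₀ := fun t => by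
    rw [or_comm, ← hroots t]; constructor <;> intro h <;> linarith
  have hdet' : d * a - -b * -c ≠ 0 := by rwa [show d * a - -b * -c = a * d - b * c by ring]
  have hlt' : |-c * r₀ + a| < |-c * r₁ + a| := by
    rwa [show -c * r₀ + a = c * r₁ + d by linarith, show -c * r₁ + a = c * r₀ + d by linarith]
  exact ⟨r₀, r₁, coe_injective.ne hne, mobius_eq_self_iff_of_roots hc hdet hroots,
    fun q => tendsto_mobius_iterate hc hdet hroots hne hlt,
    fun q => tendsto_mobius_iterate (neg_ne_zero.mpr hc) hdet' hroots' hne.symm hlt'⟩
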